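/- Let U, T, X, Y be discrete random variables and Y* a random variable satisfying P(Y*=y* | X=x, T=t, Y=y, U=u) = P(Y*=y* | U=u) = P(Y=y* | T=t, U=u) for all u, y* (independence of counterfactual outcome from evidence at unit level), with P(X=x, T=t, Y=y) > 0 and P(T=t | U=u) > 0 for all u appearing with positive probability. Then E[Y* | X=x, T=t, Y=y] = E[ (Y · 1{T=t, X=x} / P(T=t, X=x)) · (P(Y=y | T=t, U) / P(Y=y | T=t, X=x)) ]. -/
import Mathlib

open scoped Classical
noncomputable section

variable {Ω : Type*} [Fintype Ω]

/-- Probability of an event under a weight function `p`. -/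
def Pr (p : Ω → ℝ) (A : Set Ω) : ℝ := ∑ ω, if ω ∈ A then p ω else 0

/-- Conditional probability `P(A | B)`. -/
def cPr (p : Ω → ℝ) (A B : Set Ω) : ℝ := Pr p (A ∩ B) / Pr p B

/-- Expectation. -/
def Ex (p : Ω → ℝ) (Y : Ω → ℝ) : ℝ := ∑ ω, p ω * Y ω

/-- Conditional expectation given an event. -/
def cEx (p : Ω → ℝ) (Y : Ω → ℝ) (A : Set Ω) : ℝ :=
  (∑ ω, if ω ∈ A then p ω * Y ω else 0) / Pr p A

/-- `p` is a probability mass function on `Ω`. -/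
def IsProb (p : Ω → ℝ) : Prop := (∀ ω, 0 ≤ p ω) ∧ ∑ ω, p ω = 1

section Stmt9Aux
variable {Ω : Type*} [Fintype Ω]

lemma Pr_nonneg {p : Ω → ℝ} (hp : ∀ ω, 0 ≤ p ω) (A : Set Ω) : 0 ≤ Pr p A := by
  apply Finset.sum_nonneg; intro ω _; split <;> simp [hp ω]

lemma Pr_mono {p : Ω → ℝ} (hp : ∀ ω, 0 ≤ p ω) {A B : Set Ω} (h : A ⊆ B) :
    Pr p A ≤ Pr p B := by
  apply Finset.sum_le_sum; intro ω _
  by_cases hA : ω ∈ A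
  · simp [hA, h hA]
  · simp only [hA, if_false]; split <;> simp [hp ω]

lemma Pr_zero_forall {p : Ω → ℝ} (hp : ∀ ω, 0 ≤ p ω) {A : Set Ω} (h : Pr p A = 0) :
    ∀ ω ∈ A, p ω = 0 := by
  intro ω hω
  have := (Finset.sum_eq_zero_iff_of_nonneg (by intro i _; split <;> simp [hp i])).mp h ω
    (Finset.mem_univ ω)
  simpa [hω] using this

lemma Pr_inter_eq {p : Ω → ℝ} {B : Set Ω} (hB : Pr p B ≠ 0) (A : Set Ω) :
    Pr p (A ∩ B) = cPr p A B * Pr p B := by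
  unfold cPr; field_simp

lemma Pr_congr {p : Ω → ℝ} {A B : Set Ω} (h : A = B) : Pr p A = Pr p B := by rw [h]

/-- decomposition of a weighted sum over values of f -/
lemma sum_val_decomp (p : Ω → ℝ) (f : Ω → ℝ) (S : Set Ω) [DecidablePred (· ∈ S)] (s : Finset ℝ)
    (hs : ∀ ω, f ω ∈ s) :
    (∑ ω, if ω ∈ S then p ω * f ω else 0)
      = ∑ y0 ∈ s, y0 * Pr p ({ω | f ω = y0} ∩ S) := by
  unfold Pr
  simp only [Set.mem_inter_iff, Set.mem_setOf_eq]
  have this1 : ∀ y0 ∈ s, y0 * ∑ ω, (if f ω = y0 ∧ ω ∈ S then p ω else 0)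
      = ∑ ω, (if f ω = y0 ∧ ω ∈ S then y0 * p ω else 0) := by
    intro y0 _
    rw [Finset.mul_sum]
    apply Finset.sum_congr rfl
    intro ω _
    by_cases h1 : f ω = y0 ∧ ω ∈ S <;> simp [h1]
  symm
  calc _ = ∑ y0 ∈ s, ∑ ω, (if f ω = y0 ∧ ω ∈ S then y0 * p ω else 0) := by
        exact Finset.sum_congr rfl this1
    _ = ∑ ω, ∑ y0 ∈ s, (if f ω = y0 ∧ ω ∈ S then y0 * p ω else 0) := Finset.sum_comm
    _ = ∑ ω, (if ω ∈ S then p ω * f ω else 0) := by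
        apply Finset.sum_congr rfl
        intro ω _
        by_cases hω : ω ∈ S
        · rw [Finset.sum_eq_single_of_mem (f ω) (hs ω)]
          · simp [hω, mul_comm]
          · intro y0 _ hne
            rw [if_neg (fun h => hne h.1.symm)]
        · simp [hω]

/-- fiberwise decomposition over values of U -/
lemma sum_fiber_decomp {ιU : Type*} (U : Ω → ιU) (g : Ω → ℝ) :
    (∑ ω, g ω) = ∑ u ∈ Finset.univ.image U, ∑ ω ∈ Finset.univ.filter (fun ω => U ω = u), g ω := by
  rw [Finset.sum_fiberwise_of_maps_to (g := U) (fun ω _ => Finset.mem_image_of_mem U (Finset.mem_univ ω))]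

end Stmt9Aux

/-- identification of E[Y^d(t) | X=x, T=t, Y=y] via reweighting. -/
theorem stmt9 {ιU ιT ιX : Type*} (p : Ω → ℝ) (hp : IsProb p)
    (U : Ω → ιU) (T : Ω → ιT) (X : Ω → ιX) (Y Ystar : Ω → ℝ)
    (t : ιT) (x : ιX) (y : ℝ)
    (hEpos : Pr p ({ω | X ω = x} ∩ {ω | T ω = t} ∩ {ω | Y ω = y}) > 0)
    (hpos : ∀ u : ιU, Pr p {ω | U ω = u} > 0 →
      cPr p {ω | T ω = t} {ω | U ω = u} > 0)
    -- X conditionally independent of (T, Y) given U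
    (hCI : ∀ (u : ιU) (x0 : ιX) (t0 : ιT) (y0 : ℝ), Pr p {ω | U ω = u} > 0 →
      cPr p ({ω | X ω = x0} ∩ {ω | T ω = t0} ∩ {ω | Y ω = y0}) {ω | U ω = u} =
      cPr p {ω | X ω = x0} {ω | U ω = u} *
        cPr p ({ω | T ω = t0} ∩ {ω | Y ω = y0}) {ω | U ω = u})
    -- unit-level independence of the counterfactual outcome from evidence
    (hconsist : ∀ u : ιU,
      Pr p ({ω | X ω = x} ∩ {ω | T ω = t} ∩ {ω | Y ω = y} ∩ {ω | U ω = u}) > 0 →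
      ∀ ystar : ℝ,
      cPr p {ω | Ystar ω = ystar}
          ({ω | X ω = x} ∩ {ω | T ω = t} ∩ {ω | Y ω = y} ∩ {ω | U ω = u}) =
        cPr p {ω | Ystar ω = ystar} {ω | U ω = u} ∧
      cPr p {ω | Ystar ω = ystar} {ω | U ω = u} =
        cPr p {ω | Y ω = ystar} ({ω | T ω = t} ∩ {ω | U ω = u})) :
    cEx p Ystar ({ω | X ω = x} ∩ {ω | T ω = t} ∩ {ω | Y ω = y}) =
      Ex p (fun ω =>
        Y ω * (if T ω = t ∧ X ω = x then 1 else 0) /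
          Pr p ({ω' | T ω' = t} ∩ {ω' | X ω' = x}) *
        (cPr p {ω' | Y ω' = y} ({ω' | T ω' = t} ∩ {ω' | U ω' = U ω}) /
          cPr p {ω' | Y ω' = y} ({ω' | T ω' = t} ∩ {ω' | X ω' = x}))) := by
  obtain ⟨hp0, -⟩ := hp
  set A : Set Ω := {ω | X ω = x} with hA
  set B : Set Ω := {ω | T ω = t} with hB
  set C : Set Ω := {ω | Y ω = y} with hC
  set E : Set Ω := A ∩ B ∩ C with hE
  have hPE : 0 < Pr p E := hEpos
  have hPBA : 0 < Pr p (B ∩ A) := by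
    refine lt_of_lt_of_le hPE (Pr_mono hp0 ?_)
    intro ω hω
    exact ⟨hω.1.2, hω.1.1⟩
  have hCBA : C ∩ (B ∩ A) = E := by
    rw [hE, Set.inter_comm C, Set.inter_comm B A]
  have hcC : cPr p C (B ∩ A) = Pr p E / Pr p (B ∩ A) := by
    rw [cPr, hCBA]
  have hden : Pr p (B ∩ A) * cPr p C (B ∩ A) = Pr p E := by
    rw [hcC]
    field_simp
  rw [cEx, Ex]
  have hRHS : ∀ ω : Ω, p ω * (Y ω * (if T ω = t ∧ X ω = x then 1 else 0) /
        Pr p (B ∩ A) *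
        (cPr p C (B ∩ {ω' | U ω' = U ω}) / cPr p C (B ∩ A)))
      = (p ω * Y ω * (if T ω = t ∧ X ω = x then 1 else 0) *
          cPr p C (B ∩ {ω' | U ω' = U ω})) / (Pr p (B ∩ A) * cPr p C (B ∩ A)) := by
    intro ω
    ring
  simp only [hRHS, hden]
  rw [← Finset.sum_div]
  congr 1
  refine (sum_fiber_decomp U _).trans (Eq.trans ?_ (sum_fiber_decomp U _).symm)
  apply Finset.sum_congr rfl
  intro u _
  -- replace U ω by u inside the fiber sum
  have hfix : ∑ ω ∈ Finset.univ.filter (fun ω => U ω = u),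
        p ω * Y ω * (if T ω = t ∧ X ω = x then 1 else 0) *
          cPr p C (B ∩ {ω' | U ω' = U ω})
      = ∑ ω ∈ Finset.univ.filter (fun ω => U ω = u),
        p ω * Y ω * (if T ω = t ∧ X ω = x then 1 else 0) *
          cPr p C (B ∩ {ω' | U ω' = u}) := by
    apply Finset.sum_congr rfl
    intro ω hω
    rw [(Finset.mem_filter.mp hω).2]
  rw [hfix]
  by_cases hu : 0 < Pr p {ω | U ω = u}
  · -- positive fiber
    have hune : Pr p {ω | U ω = u} ≠ 0 := ne_of_gt hu
    have hBf : 0 < Pr p (B ∩ {ω | U ω = u}) := by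
      have h1 := hpos u hu
      have h2 := mul_pos h1 hu
      rwa [cPr, div_mul_cancel₀ _ hune] at h2
    have hBfne : Pr p (B ∩ {ω | U ω = u}) ≠ 0 := ne_of_gt hBf
    set s : Finset ℝ := Finset.univ.image Ystar ∪ Finset.univ.image Y with hs
    have hsY : ∀ ω, Y ω ∈ s :=
      fun ω => Finset.mem_union_right _ (Finset.mem_image_of_mem _ (Finset.mem_univ ω))
    have hsYs : ∀ ω, Ystar ω ∈ s :=
      fun ω => Finset.mem_union_left _ (Finset.mem_image_of_mem _ (Finset.mem_univ ω))
    -- left side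
    have hterm : ∀ y0 ∈ s,
        y0 * Pr p ({ω | Ystar ω = y0} ∩ (E ∩ {ω' | U ω' = u}))
          = y0 * (cPr p {ω | Y ω = y0} (B ∩ {ω | U ω = u}) *
              Pr p (E ∩ {ω | U ω = u})) := by
      intro y0 _
      by_cases hEf : 0 < Pr p (E ∩ {ω | U ω = u})
      · have hc := hconsist u hEf y0
        rw [Pr_inter_eq (ne_of_gt hEf), hc.1, hc.2]
      · have h0 : Pr p (E ∩ {ω | U ω = u}) = 0 :=
          le_antisymm (not_lt.mp hEf) (Pr_nonneg hp0 _)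
        have h00 : Pr p ({ω | Ystar ω = y0} ∩ (E ∩ {ω' | U ω' = u})) = 0 :=
          le_antisymm (h0 ▸ Pr_mono hp0 Set.inter_subset_right) (Pr_nonneg hp0 _)
        rw [h0, h00]
        ring
    -- right side
    have hPr1 : ∀ y0 : ℝ,
        Pr p ({ω | Y ω = y0} ∩ ((B ∩ A) ∩ {ω' | U ω' = u}))
          = cPr p A {ω | U ω = u} *
            (cPr p {ω | Y ω = y0} (B ∩ {ω | U ω = u}) *
              Pr p (B ∩ {ω | U ω = u})) := by
      intro y0
      have e1 : {ω | Y ω = y0} ∩ ((B ∩ A) ∩ {ω' | U ω' = u})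
          = (A ∩ B ∩ {ω | Y ω = y0}) ∩ {ω | U ω = u} := by
        ext ω
        simp only [Set.mem_inter_iff]
        tauto
      have e2 : (B ∩ {ω | Y ω = y0}) ∩ {ω | U ω = u}
          = {ω | Y ω = y0} ∩ (B ∩ {ω | U ω = u}) := by
        ext ω
        simp only [Set.mem_inter_iff]
        tauto
      rw [e1, Pr_inter_eq hune, hCI u x t y0 hu, mul_assoc,
        ← Pr_inter_eq hune, e2, Pr_inter_eq hBfne]
    have hF : Pr p (E ∩ {ω | U ω = u})
        = cPr p A {ω | U ω = u} *
          (cPr p C (B ∩ {ω | U ω = u}) * Pr p (B ∩ {ω | U ω = u})) := by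
      have e3 : (B ∩ C) ∩ {ω | U ω = u} = C ∩ (B ∩ {ω | U ω = u}) := by
        ext ω
        simp only [Set.mem_inter_iff]
        tauto
      rw [Pr_inter_eq hune, hE]
      rw [hCI u x t y hu, mul_assoc, ← Pr_inter_eq hune, e3,
        Pr_inter_eq hBfne]
    calc _ = ∑ y0 ∈ s, y0 * Pr p ({ω | Ystar ω = y0} ∩ (E ∩ {ω' | U ω' = u})) := by
          rw [← sum_val_decomp p Ystar (E ∩ {ω' | U ω' = u}) s hsYs,
            Finset.sum_filter]
          apply Finset.sum_congr rfl
          intro ω _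
          by_cases h1 : U ω = u <;> by_cases h2 : ω ∈ E <;>
            simp [h1, h2, Set.mem_inter_iff, Set.mem_setOf_eq]
      _ = ∑ y0 ∈ s, y0 * (cPr p {ω | Y ω = y0} (B ∩ {ω | U ω = u}) *
            Pr p (E ∩ {ω | U ω = u})) := Finset.sum_congr rfl hterm
      _ = ∑ y0 ∈ s, (y0 * Pr p ({ω | Y ω = y0} ∩ ((B ∩ A) ∩ {ω' | U ω' = u}))) *
            cPr p C (B ∩ {ω | U ω = u}) := by
          apply Finset.sum_congr rfl
          intro y0 _
          rw [hPr1 y0, hF]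
          ring
      _ = _ := by
          rw [← Finset.sum_mul,
            ← sum_val_decomp p Y ((B ∩ A) ∩ {ω' | U ω' = u}) s hsY,
            Finset.sum_filter, Finset.sum_mul]
          apply Finset.sum_congr rfl
          intro ω _
          by_cases h1 : U ω = u <;> by_cases h2 : T ω = t ∧ X ω = x <;>
            simp [h1, h2, hA, hB, Set.mem_inter_iff, Set.mem_setOf_eq]
  · -- zero-probability fiber
    have hu0 : Pr p {ω | U ω = u} = 0 :=
      le_antisymm (not_lt.mp hu) (Pr_nonneg hp0 _)
    have hz : ∀ ω : Ω, U ω = u → p ω = 0 :=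
      fun ω h => Pr_zero_forall hp0 hu0 ω h
    rw [Finset.sum_eq_zero, Finset.sum_eq_zero]
    · intro ω hω
      rw [hz ω (Finset.mem_filter.mp hω).2]
      ring
    · intro ω hω
      rw [hz ω (Finset.mem_filter.mp hω).2]
      simp
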